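/- arXiv:1804.06182 — 3 statements merged into one kernel-verified Lean document; each statement's English description precedes it below -/
import Mathlib

section
/- Let Φ = Ā_R ⊙ Ξ be the elementwise product of the augmented adjacency matrix (with self-loops) restricted to rows indexed by a sampling set R with no repeated nodes, and an independent random matrix Ξ with entries drawn from a continuous (absolutely continuous) distribution. Then Φ has full row rank with probability 1. -/
/-!
The `R × R` block of `Φ` formed by the columns indexed by `R` has a determinant that is a
polynomial in the entries of `Ξ`. Thanks to the self-loops this polynomial is not identically
zero: choosing `Ξ` to be the identity on that block makes the block the identity matrix. The zero
set of a nonzero real polynomial is null for any product of atomless σ-finite measures (induct on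
the number of variables: for almost every value of the last ones, the leading coefficient in the
first variable is nonzero, leaving finitely many roots). Independence makes the law of `Ξ` such a
product, so the block is almost surely invertible and `Φ` has full row rank.
-/

open MeasureTheory ProbabilityTheory

namespace MvPolynomial

theorem ae_pi_eval_ne_zero_of_fin {n : ℕ} (ν : Fin n → Measure ℝ) [∀ i, SigmaFinite (ν i)]
    [∀ i, NullSingletonClass (ν i)] {p : MvPolynomial (Fin n) ℝ} (hp : p ≠ 0) :
    ∀ᵐ x ∂Measure.pi ν, eval x p ≠ 0 := by
  induction n with
  | zero =>
    obtain ⟨c, rfl⟩ := C_surjective (Fin 0) p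
    exact ae_of_all _ fun x => by simpa using hp
  | succ n ih =>
    set q := finSuccEquiv ℝ n p
    have hlead : ∀ᵐ y ∂Measure.pi fun j => ν ((0 : Fin (n + 1)).succAbove j),
        eval y q.leadingCoeff ≠ 0 :=
      ih _ (Polynomial.leadingCoeff_ne_zero.2 (by simpa [q] using hp))
    have hfiber : ∀ᵐ y ∂Measure.pi (fun j => ν ((0 : Fin (n + 1)).succAbove j)),
        ∀ᵐ a ∂ν 0, eval (Fin.cons a y : Fin (n + 1) → ℝ) p ≠ 0 := by
      filter_upwards [hlead] with y hy
      have hr : q.map (eval y) ≠ 0 := fun h => hy <| by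
        simpa [h] using (Polynomial.coeff_map (p := q) (eval y) q.natDegree).symm
      refine measure_mono_null (fun a ha => ?_)
        ((Polynomial.finite_setOfPred_isRoot hr).measure_zero _)
      simpa [eval_eq_eval_mv_eval'] using ha
    have hmeas : MeasurableSet
        {z : ℝ × (Fin n → ℝ) | eval (Fin.cons z.1 z.2 : Fin (n + 1) → ℝ) p ≠ 0} :=
      (isOpen_ne_fun ((continuous_eval p).comp (by fun_prop)) continuous_const).measurableSet
    have hprod := (Measure.ae_prod_iff_ae_ae hmeas).2 ((Measure.ae_ae_comm hmeas).2 hfiber)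
    rw [← (measurePreserving_piFinSuccAbove ν 0).map_eq,
      MeasurableEmbedding.ae_map_iff (MeasurableEquiv.measurableEmbedding _)] at hprod
    simpa using hprod

theorem ae_pi_eval_ne_zero {ι : Type*} [Fintype ι] (ν : ι → Measure ℝ) [∀ i, SigmaFinite (ν i)]
    [∀ i, NullSingletonClass (ν i)] {p : MvPolynomial ι ℝ} (hp : p ≠ 0) :
    ∀ᵐ x ∂Measure.pi ν, eval x p ≠ 0 := by
  let e := (Fintype.equivFin ι).symm
  rw [← (measurePreserving_piCongrLeft ν e).map_eq,
    MeasurableEmbedding.ae_map_iff (MeasurableEquiv.measurableEmbedding _)]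
  have hfin := ae_pi_eval_ne_zero_of_fin (fun i => ν (e i))
    ((rename_injective _ e.symm.injective).ne hp)
  filter_upwards [hfin] with y hy
  rw [eval_rename] at hy
  convert hy using 3
  ext i
  simp [MeasurableEquiv.coe_piCongrLeft, Equiv.piCongrLeft_apply_eq_cast]

theorem ae_det_map_eval_ne_zero {ι m : Type*} [Fintype ι] [Fintype m] [DecidableEq m]
    (ν : ι → Measure ℝ) [∀ i, SigmaFinite (ν i)] [∀ i, NullSingletonClass (ν i)]
    (M : Matrix m m (MvPolynomial ι ℝ)) {x₀ : ι → ℝ} (h₀ : (M.map (eval x₀)).det ≠ 0) :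
    ∀ᵐ x ∂Measure.pi ν, (M.map (eval x)).det ≠ 0 := by
  have hdet (x : ι → ℝ) : eval x M.det = (M.map (eval x)).det := RingHom.map_det _ M
  have hM : M.det ≠ 0 := fun h => h₀ (by rw [← hdet, h, map_zero])
  simpa only [hdet] using ae_pi_eval_ne_zero ν hM

end MvPolynomial

namespace Matrix

theorem rank_eq_card_height_of_det_submatrix_ne_zero {m n K : Type*} [Fintype m] [Fintype n]
    [DecidableEq m] [Field K] (A : Matrix m n K) (c : m → n) (h : (A.submatrix id c).det ≠ 0) :
    A.rank = Fintype.card m :=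
  (rank_le_card_height A).antisymm <| by
    rw [← rank_of_isUnit _ ((isUnit_iff_isUnit_det _).2 h.isUnit)]
    exact rank_submatrix_le A id c

open MvPolynomial in
theorem ae_rank_hadamard_eq_card_height {m n : Type*} [Fintype m] [Fintype n] [DecidableEq m]
    [DecidableEq n] (A : Matrix m n ℝ) {c : m → n} (hc : Function.Injective c)
    (hA : ∀ i, A i (c i) ≠ 0) (ν : m × n → Measure ℝ) [∀ q, SigmaFinite (ν q)]
    [∀ q, NullSingletonClass (ν q)] :
    ∀ᵐ x ∂Measure.pi ν, (A ⊙ of (Function.curry x)).rank = Fintype.card m := by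
  let M : Matrix m m (MvPolynomial (m × n) ℝ) := of fun i j => C (A i (c j)) * X (i, c j)
  have hM (x : m × n → ℝ) : M.map (eval x) = (A ⊙ of (Function.curry x)).submatrix id c := by
    ext i j; simp [M, hadamard]
  let x₀ : m × n → ℝ := fun q => if q.2 = c q.1 then (A q.1 q.2)⁻¹ else 0
  have hid : M.map (eval x₀) = 1 := by
    ext i j
    by_cases hij : i = j
    · subst hij; simp [M, x₀, hA]
    · simp [M, x₀, one_apply_ne hij, hc.eq_iff, Ne.symm hij]
  have hid_det : (M.map (eval x₀)).det ≠ 0 := by rw [hid, det_one]; exact one_ne_zero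
  filter_upwards [ae_det_map_eval_ne_zero ν M hid_det] with x hx
  exact rank_eq_card_height_of_det_submatrix_ne_zero _ c (hM x ▸ hx)

end Matrix

/-- `Φ = Ā_R ⊙ Ξ`, the Hadamard product of the self-loop-augmented adjacency
pattern restricted to rows in a sampling set `R` of distinct nodes, with a
matrix `Ξ` of independent continuously distributed entries, has full row rank
with probability 1. -/
theorem stmt4 {V : Type*} [Fintype V] [DecidableEq V]
    {Ω : Type*} [MeasurableSpace Ω] (μ : Measure Ω) [IsProbabilityMeasure μ]
    (Nbar : V → Finset V) (hself : ∀ i, i ∈ Nbar i)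
    (R : Finset V)
    (Ξ : Ω → Matrix ↥R V ℝ)
    (hmeas : ∀ i j, Measurable fun ω => Ξ ω i j)
    (hindep : iIndepFun (fun (p : ↥R × V) ω => Ξ ω p.1 p.2) μ)
    (hcont : ∀ i j, Measure.map (fun ω => Ξ ω i j) μ ≪ volume) :
    ∀ᵐ ω ∂μ, (Matrix.of fun (i : ↥R) (j : V) =>
      (if j ∈ Nbar i.1 then (1 : ℝ) else 0) * Ξ ω i j).rank = R.card := by
  have hlaw : μ.map (fun ω (q : ↥R × V) => Ξ ω q.1 q.2)
      = Measure.pi fun q => μ.map fun ω => Ξ ω q.1 q.2 :=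
    hindep.map_fun_eq_pi_map fun q => (hmeas q.1 q.2).aemeasurable
  have hatomless (q : ↥R × V) : NullSingletonClass (μ.map fun ω => Ξ ω q.1 q.2) :=
    ⟨fun x => hcont q.1 q.2 (measure_singleton x)⟩
  have hgeneric := Matrix.ae_rank_hadamard_eq_card_height
    (Matrix.of fun (i : ↥R) (j : V) => if j ∈ Nbar i.1 then (1 : ℝ) else 0)
    Subtype.val_injective (by simp [hself]) (fun q : ↥R × V => μ.map fun ω => Ξ ω q.1 q.2)
  rw [← hlaw] at hgeneric
  have hjoint : Measurable fun ω (q : ↥R × V) => Ξ ω q.1 q.2 :=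
    measurable_pi_lambda _ fun q => hmeas q.1 q.2
  simpa [Matrix.hadamard] using ae_of_ae_map hjoint.aemeasurable hgeneric
end

section
/- Given a graph G, an orthonormal basis U ∈ ℂ^{n×n}, and the randomized local aggregation matrix Φ with minimum node multiplicity g_min, suppose the signal x = U_{|S} x̂_S has known support S with |S| = k and g_min ≥ k. Then with probability 1 the matrix Ψ_{|S} = Φ U_{|S} has full column rank k, so x is perfectly recoverable from y = Φx by least squares. -/
/-!
Since `U` is invertible, some `k` rows `c` of `U_{|S}` form an invertible `k × k` block. Every
node lies in at least `g_min ≥ k` augmented neighbourhoods, so Hall's theorem gives distinct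
sampling rows `σ s` with `c s ∈ N̄_{σ s}`; putting ones at the positions `(σ s, c s)` of the
support pattern yields a matrix `Φ₀` whose `σ`-rows of `Φ₀ U_{|S}` are exactly that block.
Hence the `σ`-minor of `Φ U_{|S}` is a polynomial in the Gaussian entries that is not identically
zero. The zero set of a nonzero polynomial is null for every product of atomless measures
(Fubini, by induction on the number of variables), and by independence the law of the entries
is such a product.
-/

open MeasureTheory ProbabilityTheory

theorem Finset.exists_injective_forall_mem_of_card_le {ι α : Type*} [Fintype ι] [DecidableEq α]
    (t : ι → Finset α) (ht : ∀ i, Fintype.card ι ≤ (t i).card) :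
    ∃ f : ι → α, Function.Injective f ∧ ∀ i, f i ∈ t i := by
  refine (all_card_le_biUnion_card_iff_exists_injective t).mp fun s => ?_
  obtain rfl | ⟨i, hi⟩ := s.eq_empty_or_nonempty
  · simp
  · exact (s.card_le_univ.trans (ht i)).trans (card_le_card (subset_biUnion_of_mem t hi))

namespace Matrix

variable {m n K : Type*} [Field K] [Fintype m] [Fintype n] [DecidableEq n]

theorem rank_eq_card_width_iff_exists_det_submatrix_ne_zero (A : Matrix m n K) :
    A.rank = Fintype.card n ↔ ∃ r : n → m, (A.submatrix r id).det ≠ 0 := by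
  constructor
  · intro hA
    obtain ⟨κ, a, ha, hspan, hli⟩ := exists_linearIndependent' K A.row
    have : Fintype κ := Fintype.ofInjective a ha
    have hκ : Fintype.card κ = Fintype.card n := by
      rw [← finrank_span_eq_card hli, hspan, ← rank_eq_finrank_span_row, hA]
    obtain ⟨e⟩ := Fintype.card_eq.mp hκ.symm
    refine ⟨a ∘ e, (isUnit_iff_isUnit_det _).mp ?_ |>.ne_zero⟩
    rw [← linearIndependent_rows_iff_isUnit]
    exact hli.comp e e.injective
  · rintro ⟨r, hr⟩
    refine le_antisymm A.rank_le_card_width ?_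
    calc Fintype.card n = (A.submatrix r id).rank :=
          (rank_of_isUnit _ ((isUnit_iff_isUnit_det _).mpr hr.isUnit)).symm
      _ ≤ A.rank := rank_submatrix_le A r id

theorem rank_submatrix_id_of_isUnit {n₀ : Type*} [Fintype n₀] {U : Matrix n n K} (hU : IsUnit U)
    {f : n₀ → n} (hf : Function.Injective f) : (U.submatrix id f).rank = Fintype.card n₀ := by
  rw [← rank_transpose]
  exact ((linearIndependent_cols_iff_isUnit.mpr hU).comp f hf).rank_matrix

end Matrix

theorem Polynomial.measure_setOf_eval_ofReal_eq_zero (ν : Measure ℝ) [NullSingletonClass ν]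
    {P : Polynomial ℂ} (hP : P ≠ 0) : ν {a : ℝ | P.eval (a : ℂ) = 0} = 0 :=
  ((finite_setOfPred_isRoot hP).preimage Complex.ofReal_injective.injOn).measure_zero ν

namespace MvPolynomial

theorem isClosed_setOf_eval_ofReal_eq_zero {ι : Type*} (q : MvPolynomial ι ℂ) :
    IsClosed {x : ι → ℝ | eval (fun i => (x i : ℂ)) q = 0} :=
  isClosed_eq ((continuous_eval q).comp (by fun_prop)) continuous_const

theorem measure_pi_fin_setOf_eval_ofReal_eq_zero {n : ℕ} (ν : Fin n → Measure ℝ)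
    [∀ i, SigmaFinite (ν i)] [∀ i, NullSingletonClass (ν i)] {q : MvPolynomial (Fin n) ℂ}
    (hq : q ≠ 0) : Measure.pi ν {x | eval (fun i => (x i : ℂ)) q = 0} = 0 := by
  induction n with
  | zero =>
    obtain ⟨c, rfl⟩ := C_surjective (Fin 0) q
    simp_all
  | succ n ih =>
    set Q := finSuccEquiv ℂ n q
    have hQ : Q ≠ 0 := (map_ne_zero_iff _ (AlgEquiv.injective _)).mpr hq
    set e := MeasurableEquiv.piFinSuccAbove (fun _ : Fin (n + 1) => ℝ) 0
    set Z := {x : Fin (n + 1) → ℝ | eval (fun i => (x i : ℂ)) q = 0}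
    -- `Q` is `q` as a polynomial in `x 0`: off the null set where its leading coefficient
    -- vanishes, every section of `Z` is the root set of a nonzero univariate polynomial.
    have hsection : ∀ᵐ y ∂Measure.pi (fun j => ν (Fin.succAbove 0 j)),
        ν 0 ((fun a => e.symm (a, y)) ⁻¹' Z) = 0 := by
      have hlead := measure_eq_zero_iff_ae_notMem.mp
        (ih (fun j => ν (Fin.succAbove 0 j)) (Polynomial.leadingCoeff_ne_zero.mpr hQ))
      filter_upwards [hlead] with y hy
      have hQy : Q.map (eval fun j => (y j : ℂ)) ≠ 0 := fun h =>
        hy (by simpa [Polynomial.coeff_map] using congrArg (Polynomial.coeff · Q.natDegree) h)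
      convert Polynomial.measure_setOf_eval_ofReal_eq_zero (ν 0) hQy using 2
      ext a
      have hcons : e.symm (a, y) = Fin.cons a y := Fin.insertNth_zero' a y
      have hcons' : (fun i => ((Fin.cons a y : Fin (n + 1) → ℝ) i : ℂ)) =
          Fin.cons (a : ℂ) (fun j => (y j : ℂ)) :=
        Fin.comp_cons Complex.ofReal a y
      simp only [Set.mem_preimage, Set.mem_ofPred_eq, Z, Q, hcons, hcons',
        eval_eq_eval_mv_eval']
    rw [← (measurePreserving_piFinSuccAbove ν 0).symm.measure_preimage_equiv,
      Measure.prod_apply_symm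
        (e.symm.measurable (isClosed_setOf_eval_ofReal_eq_zero q).measurableSet)]
    exact (lintegral_congr_ae hsection).trans lintegral_zero

theorem ae_pi_eval_ofReal_ne_zero {ι : Type*} [Fintype ι] (ν : ι → Measure ℝ)
    [∀ i, SigmaFinite (ν i)] [∀ i, NullSingletonClass (ν i)] {q : MvPolynomial ι ℂ}
    (hq : q ≠ 0) : ∀ᵐ x ∂Measure.pi ν, eval (fun i => (x i : ℂ)) q ≠ 0 := by
  let e := Fintype.equivFin ι
  have hq' : rename e q ≠ 0 := by
    rwa [Ne, ← map_zero (rename e), (rename_injective _ e.injective).eq_iff]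
  suffices Measure.pi ν {x | eval (fun i => (x i : ℂ)) q = 0} = 0 from
    measure_eq_zero_iff_ae_notMem.mp this
  rw [← (measurePreserving_piCongrLeft (α := fun _ : ι => ℝ) ν e.symm)
    |>.measure_preimage_equiv]
  convert measure_pi_fin_setOf_eval_ofReal_eq_zero (fun j => ν (e.symm j)) hq' using 2
  ext x
  simp [MeasurableEquiv.coe_piCongrLeft, Equiv.piCongrLeft_apply, eval_rename, Function.comp_def]

end MvPolynomial

namespace Matrix

variable {ι κ n R S : Type*} (p : ι → κ → Prop) [∀ i j, Decidable (p i j)]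

def ofPattern [Zero R] (x : {e : ι × κ // p e.1 e.2} → R) : Matrix ι κ R :=
  of fun i j => if h : p i j then x ⟨(i, j), h⟩ else 0

theorem ofPattern_map [Zero R] [Zero S] (x : {e : ι × κ // p e.1 e.2} → R) {f : R → S}
    (hf : f 0 = 0) : (ofPattern p x).map f = ofPattern p (f ∘ x) := by
  ext i j
  by_cases h : p i j <;> simp [ofPattern, h, hf]

theorem ofPattern_restrict [Zero R] {A : Matrix ι κ R} (hA : ∀ i j, ¬p i j → A i j = 0) :
    ofPattern p (fun e => A e.1.1 e.1.2) = A := by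
  ext i j
  by_cases h : p i j <;> simp [ofPattern, h, hA]

variable [Fintype ι] [Fintype κ] [Fintype n] [DecidableEq n]

theorem ae_rank_map_eval_ofReal_eq_card_width {σ : Type*} [Fintype σ] (ν : σ → Measure ℝ)
    [∀ i, SigmaFinite (ν i)] [∀ i, NullSingletonClass (ν i)]
    (M : Matrix ι n (MvPolynomial σ ℂ)) (x₀ : σ → ℝ)
    (h₀ : (M.map (MvPolynomial.eval fun i => (x₀ i : ℂ))).rank = Fintype.card n) :
    ∀ᵐ x ∂Measure.pi ν,
      (M.map (MvPolynomial.eval fun i => (x i : ℂ))).rank = Fintype.card n := by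
  have heval (x : σ → ℂ) (r : n → ι) : MvPolynomial.eval x (M.submatrix r id).det =
      ((M.map (MvPolynomial.eval x)).submatrix r id).det := by
    rw [RingHom.map_det, RingHom.mapMatrix_apply, submatrix_map]
  obtain ⟨r, hr⟩ := (rank_eq_card_width_iff_exists_det_submatrix_ne_zero _).mp h₀
  have hminor : (M.submatrix r id).det ≠ 0 := fun h => hr (by rw [← heval, h, map_zero])
  filter_upwards [MvPolynomial.ae_pi_eval_ofReal_ne_zero ν hminor] with x hx
  exact (rank_eq_card_width_iff_exists_det_submatrix_ne_zero _).mpr ⟨r, by rwa [← heval]⟩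

theorem ae_rank_ofPattern_mul_eq_card_width (ν : {e : ι × κ // p e.1 e.2} → Measure ℝ)
    [∀ e, SigmaFinite (ν e)] [∀ e, NullSingletonClass (ν e)] (B : Matrix κ n ℂ)
    (x₀ : {e : ι × κ // p e.1 e.2} → ℝ)
    (h₀ : ((ofPattern p x₀).map Complex.ofReal * B).rank = Fintype.card n) :
    ∀ᵐ x ∂Measure.pi ν, ((ofPattern p x).map Complex.ofReal * B).rank = Fintype.card n := by
  let M := ofPattern p (MvPolynomial.X (R := ℂ)) *
    B.map (MvPolynomial.C (σ := {e : ι × κ // p e.1 e.2}))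
  have hM (x : {e : ι × κ // p e.1 e.2} → ℝ) :
      M.map (MvPolynomial.eval fun e => (x e : ℂ)) = (ofPattern p x).map Complex.ofReal * B := by
    simp only [M, Matrix.map_mul, ofPattern_map _ _ (map_zero _),
      ofPattern_map _ _ Complex.ofReal_zero, Matrix.map_map]
    simp [Function.comp_def]
  simpa only [hM] using ae_rank_map_eval_ofReal_eq_card_width ν M x₀ (by rwa [hM])

theorem exists_rank_ofPattern_mul_eq_card_width (B : Matrix κ n ℂ) {c : n → κ}
    (hc : (B.submatrix c id).det ≠ 0) {σ : n → ι} (hσ : Function.Injective σ)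
    (hp : ∀ t, p (σ t) (c t)) :
    ∃ x₀, ((ofPattern p x₀).map Complex.ofReal * B).rank = Fintype.card n := by
  classical
  let A₀ : Matrix ι κ ℝ := of fun i j => if ∃ t, σ t = i ∧ c t = j then 1 else 0
  have hA₀ : ∀ i j, ¬p i j → A₀ i j = 0 := by
    rintro i j hij
    refine if_neg ?_
    rintro ⟨t, rfl, rfl⟩
    exact hij (hp t)
  refine ⟨fun e => A₀ e.1.1 e.1.2,
    (rank_eq_card_width_iff_exists_det_submatrix_ne_zero _).mpr ⟨σ, ?_⟩⟩
  have hrows : ((ofPattern p fun e => A₀ e.1.1 e.1.2).map Complex.ofReal * B).submatrix σ id =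
      B.submatrix c id := by
    rw [ofPattern_restrict p hA₀]
    ext t s
    simp [A₀, mul_apply, hσ.eq_iff, apply_ite Complex.ofReal]
  rwa [hrows]

end Matrix

theorem stmt7_general {V : Type*} [Fintype V] [DecidableEq V] {m k : ℕ}
    {Ω : Type*} [MeasurableSpace Ω] (μ : Measure Ω)
    (Nbar : V → Finset V)
    (π : Fin m → V)
    (g : V → ℕ)
    (hg : ∀ j, g j = (Finset.univ.filter fun i : Fin m => j ∈ Nbar (π i)).card)
    (hgmin : ∀ j, k ≤ g j)
    (Φ : Ω → Matrix (Fin m) V ℝ)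
    (hzero : ∀ ω i j, j ∉ Nbar (π i) → Φ ω i j = 0)
    (hmeas : ∀ i j, Measurable fun ω => Φ ω i j)
    (hgauss : ∀ i j, j ∈ Nbar (π i) →
      Measure.map (fun ω => Φ ω i j) μ = gaussianReal 0 (1 / (g j : NNReal)))
    (hindep : iIndepFun
      (fun (p : Fin m × V) ω => Φ ω p.1 p.2) μ)
    (U : Matrix V V ℂ) (hU : U ∈ Matrix.unitaryGroup V ℂ)
    (S : Finset V) (hS : S.card = k) :
    ∀ᵐ ω ∂μ, (Matrix.of fun (i : Fin m) (s : ↥S) =>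
      (((Φ ω).map (fun r => (r : ℂ))) * U) i s.1).rank = k := by
  have hcard : Fintype.card S = k := by rw [Fintype.card_coe, hS]
  let US := U.submatrix id ((↑) : S → V)
  have hUS : US.rank = Fintype.card S :=
    Matrix.rank_submatrix_id_of_isUnit (Unitary.isUnit_coe (U := ⟨U, hU⟩)) Subtype.val_injective
  obtain ⟨c, hc⟩ := (Matrix.rank_eq_card_width_iff_exists_det_submatrix_ne_zero US).mp hUS
  obtain ⟨σ, hσ, hσc⟩ := Finset.exists_injective_forall_mem_of_card_le
    (fun s => Finset.univ.filter fun i => c s ∈ Nbar (π i))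
    (fun s => by rw [hcard, ← hg]; exact hgmin _)
  obtain ⟨x₀, hx₀⟩ := Matrix.exists_rank_ofPattern_mul_eq_card_width
    (fun i j => j ∈ Nbar (π i)) US hc hσ (fun s => by simpa using hσc s)
  let X : Ω → {e : Fin m × V // e.2 ∈ Nbar (π e.1)} → ℝ := fun ω e => Φ ω e.1.1 e.1.2
  have hX : Measurable X := measurable_pi_lambda _ fun e => hmeas _ _
  have hlaw : μ.map X = Measure.pi fun e => gaussianReal 0 (1 / (g e.1.2 : NNReal)) := by
    rw [(hindep.precomp Subtype.val_injective).map_fun_eq_pi_map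
      fun e => (hmeas _ _).aemeasurable]
    exact congrArg Measure.pi (funext fun e => hgauss _ _ e.2)
  have hatomless (e : {e : Fin m × V // e.2 ∈ Nbar (π e.1)}) :
      NullSingletonClass (gaussianReal 0 (1 / (g e.1.2 : NNReal))) := by
    have hpos : 0 < g e.1.2 := hg _ ▸ Finset.card_pos.mpr ⟨e.1.1, by simpa using e.2⟩
    exact nullSingletonClass_gaussianReal (one_div_ne_zero (Nat.cast_ne_zero.mpr hpos.ne'))
  have hae := Matrix.ae_rank_ofPattern_mul_eq_card_width (fun i j => j ∈ Nbar (π i))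
    (fun e => gaussianReal 0 (1 / (g e.1.2 : NNReal))) US x₀ hx₀
  rw [← hlaw] at hae
  filter_upwards [ae_of_ae_map hX.aemeasurable hae] with ω hω
  rwa [Matrix.ofPattern_restrict (fun i j => j ∈ Nbar (π i)) (hzero ω), hcard] at hω

/-- Known-support perfect reconstruction: for the randomized local aggregation
matrix `Φ` (Gaussian entries `N(0, 1/g j)` on the augmented neighborhoods of a
sampling set covering a dominating set) and unitary `U`, if the support `S` has
`|S| = k` and `g_min ≥ k`, then with probability 1 the matrix
`Ψ_{|S} = Φ U_{|S}` has full column rank `k`. -/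
theorem stmt7 {V : Type*} [Fintype V] [DecidableEq V] {m k : ℕ}
    {Ω : Type*} [MeasurableSpace Ω] (μ : Measure Ω) [IsProbabilityMeasure μ]
    (Nbar : V → Finset V) (hself : ∀ i, i ∈ Nbar i)
    (π : Fin m → V) (hdom : ∀ j : V, ∃ i : Fin m, j ∈ Nbar (π i))
    (g : V → ℕ)
    (hg : ∀ j, g j = (Finset.univ.filter fun i : Fin m => j ∈ Nbar (π i)).card)
    (hgmin : ∀ j, k ≤ g j)
    (Φ : Ω → Matrix (Fin m) V ℝ)
    (hzero : ∀ ω i j, j ∉ Nbar (π i) → Φ ω i j = 0)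
    (hmeas : ∀ i j, Measurable fun ω => Φ ω i j)
    (hgauss : ∀ i j, j ∈ Nbar (π i) →
      Measure.map (fun ω => Φ ω i j) μ = gaussianReal 0 (1 / (g j : NNReal)))
    (hindep : iIndepFun
      (fun (p : Fin m × V) ω => Φ ω p.1 p.2) μ)
    (U : Matrix V V ℂ) (hU : U ∈ Matrix.unitaryGroup V ℂ)
    (S : Finset V) (hS : S.card = k) :
    ∀ᵐ ω ∂μ, (Matrix.of fun (i : Fin m) (s : ↥S) =>
      (((Φ ω).map (fun r => (r : ℂ))) * U) i s.1).rank = k :=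
  stmt7_general μ Nbar π g hg hgmin Φ hzero hmeas hgauss hindep U hU S hS
end

section
/- With T_x the block-diagonal matrix whose i-th diagonal block is the row vector x_{r_i}ᵀ G (where G = diag(1/√g_j)), the spectral norm satisfies ‖T_x‖₂ ≤ (1/√g_min) · max_{1≤i≤m} ‖x_{r_i}‖₂, and hence ‖T_x‖₂ ≤ (μ/√g_min) ‖x̂‖₁, where μ = min(√|N̄*| ‖U‖_MAX, 1) and x = U x̂. -/
/-!
Row `i` of `T_x v` is the dot product of the block `b_i = x_{r_i}ᵀ G` with the `i`-th slice of
`v`, so Cauchy–Schwarz row by row gives `‖T_x v‖₂ ≤ max_i ‖b_i‖₂ ‖v‖₂`, and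
`‖b_i‖₂ ≤ ‖x_{r_i}‖₂ / √g_min`. Each block norm is bounded in two ways: by
`‖x‖₂ = ‖x̂‖₂ ≤ ‖x̂‖₁` because `U` is unitary, and by `√|N̄_{r_i}| max_j |x_j|` with
`|x_j| ≤ ‖U‖_MAX ‖x̂‖₁`.
-/

open Finset Matrix

section BlockRow

variable {𝕜 ι κ : Type*} [RCLike 𝕜] [Fintype κ]

theorem norm_dotProduct_sq_le (a b : κ → 𝕜) :
    ‖a ⬝ᵥ b‖ ^ 2 ≤ (∑ j, ‖a j‖ ^ 2) * ∑ j, ‖b j‖ ^ 2 := by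
  calc ‖a ⬝ᵥ b‖ ^ 2 ≤ (∑ j, ‖a j‖ * ‖b j‖) ^ 2 := by
        gcongr
        simpa only [dotProduct, norm_mul] using norm_sum_le univ fun j => a j * b j
    _ ≤ _ := sum_mul_sq_le_sq_mul_sq _ _ _

variable [Fintype ι] [DecidableEq ι]

theorem mulVec_apply_of_blockRow {T : Matrix ι (ι × κ) 𝕜} {b : ι → κ → 𝕜}
    (hT : ∀ i p, T i p = if p.1 = i then b i p.2 else 0) (v : ι × κ → 𝕜) (i : ι) :
    (T *ᵥ v) i = b i ⬝ᵥ fun j => v (i, j) := by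
  simp [mulVec, dotProduct, hT, Fintype.sum_prod_type]

theorem sqrt_sum_norm_sq_mulVec_le_of_blockRow {T : Matrix ι (ι × κ) 𝕜} {b : ι → κ → 𝕜}
    (hT : ∀ i p, T i p = if p.1 = i then b i p.2 else 0) {c : ℝ} (hc : 0 ≤ c)
    (hb : ∀ i, √(∑ j, ‖b i j‖ ^ 2) ≤ c) (v : ι × κ → 𝕜) :
    √(∑ i, ‖(T *ᵥ v) i‖ ^ 2) ≤ c * √(∑ p, ‖v p‖ ^ 2) := by
  have hb2 : ∀ i, ∑ j, ‖b i j‖ ^ 2 ≤ c ^ 2 := fun i => (Real.sqrt_le_left hc).mp (hb i)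
  rw [← Real.sqrt_sq hc, ← Real.sqrt_mul (sq_nonneg c), Fintype.sum_prod_type, mul_sum]
  gcongr with i
  rw [mulVec_apply_of_blockRow hT]
  exact (norm_dotProduct_sq_le _ _).trans (by gcongr; exact hb2 i)

theorem sqrt_sum_norm_sq_ite_mul_le [DecidableEq κ] {s : Finset κ} {y w : κ → 𝕜} {c : ℝ}
    (hc : 0 ≤ c) (hw : ∀ j ∈ s, ‖w j‖ ≤ c) :
    √(∑ j, ‖if j ∈ s then y j * w j else 0‖ ^ 2) ≤ c * √(∑ j ∈ s, ‖y j‖ ^ 2) := by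
  simp only [apply_ite (‖·‖ ^ 2), norm_zero, zero_pow two_ne_zero, sum_ite_mem, univ_inter]
  rw [← Real.sqrt_sq hc, ← Real.sqrt_mul (sq_nonneg c), mul_sum]
  gcongr with j hj
  rw [norm_mul, mul_pow, mul_comm]
  gcongr
  exact hw j hj

end BlockRow

theorem norm_one_div_sqrt_le {g gmin : ℕ} (hg : gmin ≤ g) (hgmin : 0 < gmin) :
    ‖(1 / (√g : ℂ))‖ ≤ 1 / √gmin := by
  rw [norm_div, norm_one, Complex.norm_real, Real.norm_of_nonneg (Real.sqrt_nonneg _)]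
  gcongr

section Coherence

variable {𝕜 κ : Type*} [RCLike 𝕜]

theorem sqrt_sum_norm_sq_le_sum_norm {E : Type*} [SeminormedAddCommGroup E] (s : Finset κ)
    (y : κ → E) : √(∑ j ∈ s, ‖y j‖ ^ 2) ≤ ∑ j ∈ s, ‖y j‖ :=
  Real.sqrt_le_left (sum_nonneg fun _ _ => norm_nonneg _) |>.mpr
    (sum_sq_le_sq_sum_of_nonneg fun _ _ => norm_nonneg _)

theorem sqrt_sum_norm_sq_le_sqrt_card_mul {E : Type*} [SeminormedAddCommGroup E]
    {s : Finset κ} {y : κ → E} {c : ℝ} (hy : ∀ j ∈ s, ‖y j‖ ≤ c) :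
    √(∑ j ∈ s, ‖y j‖ ^ 2) ≤ √(#s) * c := by
  obtain rfl | ⟨j₀, hj₀⟩ := s.eq_empty_or_nonempty
  · simp
  have hc : 0 ≤ c := (norm_nonneg _).trans (hy j₀ hj₀)
  rw [← Real.sqrt_sq hc, ← Real.sqrt_mul (Nat.cast_nonneg _)]
  gcongr
  calc ∑ j ∈ s, ‖y j‖ ^ 2 ≤ ∑ _j ∈ s, c ^ 2 := by gcongr with j hj; exact hy j hj
    _ = #s * c ^ 2 := by rw [sum_const, nsmul_eq_mul]

theorem norm_mulVec_apply_le {ι : Type*} [Fintype κ] {A : Matrix ι κ 𝕜} {a : ℝ}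
    (hA : ∀ i j, ‖A i j‖ ≤ a) (y : κ → 𝕜) (i : ι) : ‖(A *ᵥ y) i‖ ≤ a * ∑ j, ‖y j‖ := by
  rw [mul_sum]
  refine (norm_sum_le _ _).trans (sum_le_sum fun j _ => ?_)
  rw [norm_mul]
  gcongr
  exact hA i j

variable [Fintype κ] [DecidableEq κ]

theorem sqrt_sum_norm_sq_mulVec_of_mem_unitaryGroup {U : Matrix κ κ 𝕜}
    (hU : U ∈ unitaryGroup κ 𝕜) (y : κ → 𝕜) :
    √(∑ j, ‖(U *ᵥ y) j‖ ^ 2) = √(∑ j, ‖y j‖ ^ 2) := by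
  have h := ContinuousLinearMap.norm_map_of_mem_unitary
    (Unitary.map_mem (toEuclideanCLM (n := κ) (𝕜 := 𝕜)) hU) (WithLp.toLp 2 y)
  rwa [toEuclideanCLM_toLp, EuclideanSpace.norm_eq, EuclideanSpace.norm_eq] at h

theorem sqrt_sum_norm_sq_mulVec_le_min {U : Matrix κ κ 𝕜} (hU : U ∈ unitaryGroup κ 𝕜)
    {Umax : ℝ} (hUmax : ∀ i j, ‖U i j‖ ≤ Umax) {s : Finset κ} {N : ℕ} (hs : #s ≤ N)
    (y : κ → 𝕜) :
    √(∑ j ∈ s, ‖(U *ᵥ y) j‖ ^ 2) ≤ min (√N * Umax) 1 * ∑ j, ‖y j‖ := by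
  have hS : 0 ≤ Umax * ∑ j, ‖y j‖ := by
    rw [mul_sum]
    exact sum_nonneg fun j _ => mul_nonneg ((norm_nonneg _).trans (hUmax j j)) (norm_nonneg _)
  rw [min_mul_of_nonneg _ _ (sum_nonneg fun _ _ => norm_nonneg _), one_mul]
  refine le_min ?_ ?_
  · calc √(∑ j ∈ s, ‖(U *ᵥ y) j‖ ^ 2) ≤ √(#s) * (Umax * ∑ j, ‖y j‖) :=
          sqrt_sum_norm_sq_le_sqrt_card_mul fun j _ => norm_mulVec_apply_le hUmax y j
      _ ≤ √N * Umax * ∑ j, ‖y j‖ := by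
          rw [mul_assoc]
          exact mul_le_mul_of_nonneg_right (Real.sqrt_le_sqrt (by exact_mod_cast hs)) hS
  · calc √(∑ j ∈ s, ‖(U *ᵥ y) j‖ ^ 2) ≤ √(∑ j, ‖(U *ᵥ y) j‖ ^ 2) := by
          gcongr
          exact subset_univ s
      _ = √(∑ j, ‖y j‖ ^ 2) := sqrt_sum_norm_sq_mulVec_of_mem_unitaryGroup hU y
      _ ≤ ∑ j, ‖y j‖ := sqrt_sum_norm_sq_le_sum_norm univ y

end Coherence

theorem stmt11_general {m n : ℕ}
    (U : Matrix (Fin n) (Fin n) ℂ) (hU : U ∈ Matrix.unitaryGroup (Fin n) ℂ)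
    (xhat : Fin n → ℂ) (x : Fin n → ℂ) (hx : x = U.mulVec xhat)
    (Nr : Fin m → Finset (Fin n))
    (g : Fin n → ℕ)
    (gmin : ℕ) (hgmin : ∀ j, gmin ≤ g j) (hgpos : 0 < gmin)
    (Nstar : ℕ) (hNstar : ∀ i, (Nr i).card ≤ Nstar)
    (Umax : ℝ) (hUmax : ∀ i j, ‖U i j‖ ≤ Umax)
    (T : Matrix (Fin m) (Fin m × Fin n) ℂ)
    (hT : ∀ i p, T i p =
      if p.1 = i ∧ p.2 ∈ Nr i then x p.2 * (1 / (Real.sqrt (g p.2) : ℂ)) else 0)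
    (μc : ℝ) (hμ : μc = min (Real.sqrt Nstar * Umax) 1) :
    ∀ v : Fin m × Fin n → ℂ,
      (Real.sqrt (∑ i, ‖T.mulVec v i‖ ^ 2) ≤
        (1 / Real.sqrt gmin) *
          (⨆ i : Fin m, Real.sqrt (∑ j ∈ Nr i, ‖x j‖ ^ 2)) *
          Real.sqrt (∑ p, ‖v p‖ ^ 2)) ∧
      (Real.sqrt (∑ i, ‖T.mulVec v i‖ ^ 2) ≤
        (μc / Real.sqrt gmin) * (∑ i, ‖xhat i‖) *
          Real.sqrt (∑ p, ‖v p‖ ^ 2)) := by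
  intro v
  set M := ⨆ i : Fin m, √(∑ j ∈ Nr i, ‖x j‖ ^ 2)
  have hblock : ∀ s : Finset (Fin n), #s ≤ Nstar →
      √(∑ j ∈ s, ‖x j‖ ^ 2) ≤ μc * ∑ k, ‖xhat k‖ := fun s hs => by
    rw [hx, hμ]
    exact sqrt_sum_norm_sq_mulVec_le_min hU hUmax hs xhat
  -- the empty block makes the bound nonnegative, as `Real.iSup_le` needs when `m = 0`
  have hM : M ≤ μc * ∑ k, ‖xhat k‖ :=
    Real.iSup_le (fun i => hblock _ (hNstar i))
      ((Real.sqrt_nonneg _).trans (hblock ∅ (Nat.zero_le _)))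
  have hrow : ∀ i, √(∑ j, ‖if j ∈ Nr i then x j * (1 / (√(g j) : ℂ)) else 0‖ ^ 2) ≤
      1 / √gmin * M := fun i => by
    refine (sqrt_sum_norm_sq_ite_mul_le (by positivity)
      fun j _ => norm_one_div_sqrt_le (hgmin j) hgpos).trans ?_
    gcongr
    exact le_ciSup (f := fun i => √(∑ j ∈ Nr i, ‖x j‖ ^ 2)) (Set.finite_range _).bddAbove i
  have hM₀ : 0 ≤ M := Real.iSup_nonneg fun _ => Real.sqrt_nonneg _
  have hfirst := sqrt_sum_norm_sq_mulVec_le_of_blockRow (fun i p => (hT i p).trans (ite_and ..))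
    (mul_nonneg (by positivity) hM₀) hrow v
  refine ⟨hfirst, hfirst.trans ?_⟩
  calc 1 / √gmin * M * √(∑ p, ‖v p‖ ^ 2)
      ≤ 1 / √gmin * (μc * ∑ k, ‖xhat k‖) * √(∑ p, ‖v p‖ ^ 2) := by gcongr
    _ = μc / √gmin * (∑ k, ‖xhat k‖) * √(∑ p, ‖v p‖ ^ 2) := by ring

/-- Spectral-norm bound for the block-diagonal matrix `T_x` with blocks
`x_{r_i}ᵀ G`, `G = diag(1/√g_j)`: as an operator, `‖T_x v‖₂` is bounded by
`(1/√g_min) max_i ‖x_{r_i}‖₂ ‖v‖₂` and hence by `(μ/√g_min) ‖x̂‖₁ ‖v‖₂`, where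
`μ = min(√|N̄*| ‖U‖_MAX, 1)` and `x = U x̂`. -/
theorem stmt11 {m n : ℕ}
    (U : Matrix (Fin n) (Fin n) ℂ) (hU : U ∈ Matrix.unitaryGroup (Fin n) ℂ)
    (xhat : Fin n → ℂ) (x : Fin n → ℂ) (hx : x = U.mulVec xhat)
    (Nr : Fin m → Finset (Fin n))
    (g : Fin n → ℕ)
    (hg : ∀ j, g j = (Finset.univ.filter fun i : Fin m => j ∈ Nr i).card)
    (gmin : ℕ) (hgmin : ∀ j, gmin ≤ g j) (hgpos : 0 < gmin)
    (Nstar : ℕ) (hNstar : ∀ i, (Nr i).card ≤ Nstar)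
    (Umax : ℝ) (hUmax : ∀ i j, ‖U i j‖ ≤ Umax)
    (T : Matrix (Fin m) (Fin m × Fin n) ℂ)
    (hT : ∀ i p, T i p =
      if p.1 = i ∧ p.2 ∈ Nr i then x p.2 * (1 / (Real.sqrt (g p.2) : ℂ)) else 0)
    (μc : ℝ) (hμ : μc = min (Real.sqrt Nstar * Umax) 1) :
    ∀ v : Fin m × Fin n → ℂ,
      (Real.sqrt (∑ i, ‖T.mulVec v i‖ ^ 2) ≤
        (1 / Real.sqrt gmin) *
          (⨆ i : Fin m, Real.sqrt (∑ j ∈ Nr i, ‖x j‖ ^ 2)) *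
          Real.sqrt (∑ p, ‖v p‖ ^ 2)) ∧
      (Real.sqrt (∑ i, ‖T.mulVec v i‖ ^ 2) ≤
        (μc / Real.sqrt gmin) * (∑ i, ‖xhat i‖) *
          Real.sqrt (∑ p, ‖v p‖ ^ 2)) :=
  stmt11_general U hU xhat x hx Nr g gmin hgmin hgpos Nstar hNstar Umax hUmax T hT μc hμ
end
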